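/- Soundness of polarized subtyping for call-by-name: for call-by-name type names t, u and their Levy translations [t]_N, [u]_N into negative CBPV type names, (1) if [t]_N full (CBPV fullness) then t full (CBN fullness, i.e. t = &{}), and (2) if [t]_N ≤ [u]_N (CBPV negative subtyping) then t ≤ u (CBN subtyping). -/

import Mathlib

/-!
CBN subtyping is a greatest fixed point, so it suffices to show that the relation
`[t]_N ≤ [u]_N` between source type names is closed under the CBN rules. Unfolding one CBPV
rule at `[t]_N ≤ [u]_N` and inverting the translation yields the matching CBN rule. The CBPV
rules without a CBN counterpart involve empty positive types; but everything the translation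
puts under `⊗` or `⊕` is a `↓`-type, which is never empty, so the only empty type below a
translated `↑` is `⊕{}`, the translation of the CBN bottom type `⊕{}`. For the same reason
a translated arrow is never full, so a full translated type is `&{}`.
-/

namespace CBPV

abbrev Label := String
abbrev Var := String

-- Positive types (values); `name` refers to an equirecursively defined type name.
mutual
inductive PosTp : Type where
  | name : String → PosTp
  | str  : PosStr → PosTp

/-- Structural positive types. -/
inductive PosStr : Type where
  | tensor : PosTp → PosTp → PosStr
  | one    : PosStr
  | plus   : List (Label × PosTp) → PosStr
  | down   : NegTp → PosStr

/-- Negative types (computations). -/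
inductive NegTp : Type where
  | name : String → NegTp
  | str  : NegStr → NegTp

/-- Structural negative types. -/
inductive NegStr : Type where
  | arrow   : PosTp → NegTp → NegStr
  | withRec : List (Label × NegTp) → NegStr
  | up      : PosTp → NegStr
end

mutual
/-- Values. -/
inductive Val : Type where
  | var   : Var → Val
  | pair  : Val → Val → Val
  | unit  : Val
  | inj   : Label → Val → Val
  | thunk : Comp → Val

/-- Computations. -/
inductive Comp : Type where
  | lam       : Var → Comp → Comp
  | app       : Comp → Val → Comp
  | record    : List (Label × Comp) → Comp
  | proj      : Comp → Label → Comp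
  | ret       : Val → Comp
  | letret    : Var → Comp → Comp → Comp
  | name      : String → Comp
  | matchPair : Val → Var → Var → Comp → Comp
  | matchUnit : Val → Comp → Comp
  | matchSum  : Val → List (Label × Var × Comp) → Comp
  | force     : Val → Comp
end

/-- A global signature: equirecursive (contractive) type definitions `t = τ⁺`,
`s = σ⁻`, and recursive expression definitions `f : σ⁻ = e`. -/
structure Signature : Type where
  pos  : String → PosStr
  neg  : String → NegStr
  defs : String → NegTp × Comp

mutual
/-- Substitution of value `w` for variable `x` in a value. -/
def substV (w : Val) (x : Var) : Val → Val
  | .var y => if y = x then w else .var y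
  | .pair v₁ v₂ => .pair (substV w x v₁) (substV w x v₂)
  | .unit => .unit
  | .inj j v => .inj j (substV w x v)
  | .thunk e => .thunk (substC w x e)

/-- Substitution of value `w` for variable `x` in a computation. -/
def substC (w : Val) (x : Var) : Comp → Comp
  | .lam y e => .lam y (if y = x then e else substC w x e)
  | .app e v => .app (substC w x e) (substV w x v)
  | .record L => .record (substRec w x L)
  | .proj e j => .proj (substC w x e) j
  | .ret v => .ret (substV w x v)
  | .letret y e₁ e₂ => .letret y (substC w x e₁) (if y = x then e₂ else substC w x e₂)
  | .name f => .name f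
  | .matchPair v y z e =>
      .matchPair (substV w x v) y z (if y = x ∨ z = x then e else substC w x e)
  | .matchUnit v e => .matchUnit (substV w x v) (substC w x e)
  | .matchSum v B => .matchSum (substV w x v) (substBr w x B)
  | .force v => .force (substV w x v)

def substRec (w : Val) (x : Var) : List (Label × Comp) → List (Label × Comp)
  | [] => []
  | (l, e) :: rest => (l, substC w x e) :: substRec w x rest

def substBr (w : Val) (x : Var) : List (Label × Var × Comp) → List (Label × Var × Comp)
  | [] => []
  | (l, y, e) :: rest =>
      (l, y, if y = x then e else substC w x e) :: substBr w x rest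
end

/-- Terminal computations. -/
inductive Terminal : Comp → Prop where
  | lam    : Terminal (.lam x e)
  | record : Terminal (.record L)
  | ret    : Terminal (.ret v)

/-- Small-step dynamics of call-by-push-value, relative to a signature. -/
inductive Step (Sg : Signature) : Comp → Comp → Prop where
  | beta       : Step Sg (.app (.lam x e) v) (substC v x e)
  | app        : Step Sg e e' → Step Sg (.app e v) (.app e' v)
  | letretBeta : Step Sg (.letret x (.ret v) e₂) (substC v x e₂)
  | letretStep : Step Sg e₁ e₁' → Step Sg (.letret x e₁ e₂) (.letret x e₁' e₂)
  | projBeta   : L.lookup j = some e → Step Sg (.proj (.record L) j) e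
  | projStep   : Step Sg e e' → Step Sg (.proj e j) (.proj e' j)
  | matchPair  : Step Sg (.matchPair (.pair v₁ v₂) x y e) (substC v₁ x (substC v₂ y e))
  | matchUnit  : Step Sg (.matchUnit .unit e) e
  | matchSum   : B.lookup j = some (x, ej) → Step Sg (.matchSum (.inj j v) B) (substC v x ej)
  | force      : Step Sg (.force (.thunk e)) e
  | name       : Sg.defs f = (σ, e) → Step Sg (.name f) e

end CBPV

namespace CBPV

def PosTp.IsName : PosTp → Prop := fun τ => ∃ t, τ = .name t
def NegTp.IsName : NegTp → Prop := fun σ => ∃ s, σ = .name s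

/-- A structural positive type is in normal form if all of its components are
type names, and its label lists have no duplicate labels. -/
def PosStrNormal : PosStr → Prop
  | .tensor τ₁ τ₂ => τ₁.IsName ∧ τ₂.IsName
  | .one => True
  | .plus L => (∀ p ∈ L, (Prod.snd p).IsName) ∧ (L.map Prod.fst).Nodup
  | .down σ => σ.IsName

def NegStrNormal : NegStr → Prop
  | .arrow τ σ => τ.IsName ∧ σ.IsName
  | .withRec L => (∀ p ∈ L, (Prod.snd p).IsName) ∧ (L.map Prod.fst).Nodup
  | .up τ => τ.IsName

/-- A signature is in normal form when every type definition alternates between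
type names and structural types, i.e. the components of every defined
structural type are themselves type names. -/
def SigNormal (Sg : Signature) : Prop :=
  (∀ t, PosStrNormal (Sg.pos t)) ∧ (∀ s, NegStrNormal (Sg.neg s))

/-- One unfolding of the rules for the emptiness judgment `t empty`. -/
def EmptyUnf (Sg : Signature) (S : String → Prop) (t : String) : Prop :=
  (∃ L, Sg.pos t = .plus L ∧
     ∀ p ∈ L, ∃ tj, Prod.snd p = PosTp.name tj ∧ S tj) ∨
  (∃ t₁ t₂, Sg.pos t = .tensor (.name t₁) (.name t₂) ∧ (S t₁ ∨ S t₂))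

/-- `t empty`: the greatest fixed point (circular derivations) of the
emptiness rules. -/
def TpEmpty (Sg : Signature) (t : String) : Prop :=
  ∃ S : String → Prop, (∀ u, S u → EmptyUnf Sg S u) ∧ S t

/-- `s full`: `s = t₁ → s₂ ∈ Σ` with `t₁ empty`, or `s = &{} ∈ Σ`. -/
def TpFull (Sg : Signature) (s : String) : Prop :=
  (∃ t₁ s₂, Sg.neg s = .arrow (.name t₁) (.name s₂) ∧ TpEmpty Sg t₁) ∨
  Sg.neg s = .withRec []

/-- One unfolding of the rules for positive subtyping `t ≤ u` between
positive type names. -/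
def PosSubUnf (Sg : Signature) (P N : String → String → Prop) (t u : String) : Prop :=
  (∃ t₁ t₂ u₁ u₂, Sg.pos t = .tensor (.name t₁) (.name t₂) ∧
     Sg.pos u = .tensor (.name u₁) (.name u₂) ∧ P t₁ u₁ ∧ P t₂ u₂) ∨
  (Sg.pos t = .one ∧ Sg.pos u = .one) ∨
  (∃ L K, Sg.pos t = .plus L ∧ Sg.pos u = .plus K ∧
     ∀ p ∈ L, ∃ tj, Prod.snd p = PosTp.name tj ∧
       (TpEmpty Sg tj ∨ ∃ uj, K.lookup (Prod.fst p) = some (PosTp.name uj) ∧ P tj uj)) ∨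
  (∃ s r, Sg.pos t = .down (.name s) ∧ Sg.pos u = .down (.name r) ∧ N s r) ∨
  TpEmpty Sg t

/-- One unfolding of the rules for negative subtyping `s ≤ r` between
negative type names. -/
def NegSubUnf (Sg : Signature) (P N : String → String → Prop) (s r : String) : Prop :=
  (∃ t₁ s₂ u₁ r₂, Sg.neg s = .arrow (.name t₁) (.name s₂) ∧
     Sg.neg r = .arrow (.name u₁) (.name r₂) ∧ P u₁ t₁ ∧ N s₂ r₂) ∨
  (∃ t u, Sg.neg s = .up (.name t) ∧ Sg.neg r = .up (.name u) ∧ P t u) ∨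
  (∃ L K, Sg.neg s = .withRec L ∧ Sg.neg r = .withRec K ∧
     ∀ p ∈ K, ∃ rj, Prod.snd p = NegTp.name rj ∧
       ∃ sj, L.lookup (Prod.fst p) = some (NegTp.name sj) ∧ N sj rj) ∨
  (∃ t, Sg.neg s = .up (.name t) ∧ TpEmpty Sg t) ∨
  TpFull Sg r

/-- `t ≤ u`: syntactic subtyping between positive type names, interpreted as
circular derivations (greatest fixed point of the subtyping rules). -/
def PosSub (Sg : Signature) (t u : String) : Prop :=
  ∃ P N : String → String → Prop,
    (∀ a b, P a b → PosSubUnf Sg P N a b) ∧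
    (∀ a b, N a b → NegSubUnf Sg P N a b) ∧ P t u

/-- `s ≤ r`: syntactic subtyping between negative type names, interpreted as
circular derivations (greatest fixed point of the subtyping rules). -/
def NegSub (Sg : Signature) (s r : String) : Prop :=
  ∃ P N : String → String → Prop,
    (∀ a b, P a b → PosSubUnf Sg P N a b) ∧
    (∀ a b, N a b → NegSubUnf Sg P N a b) ∧ N s r

end CBPV

namespace CBPV

/-- Structural source-language types (for call-by-name and call-by-value),
with type-name components: functions, eager pairs, unit, variant records and
lazy records. -/
inductive SrcTp : Type where
  | arrow   : String → String → SrcTp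
  | tensor  : String → String → SrcTp
  | one     : SrcTp
  | plus    : List (Label × String) → SrcTp
  | withRec : List (Label × String) → SrcTp

/-- A source-language signature of equirecursive type-name definitions. -/
structure SrcSig : Type where
  def_ : String → SrcTp

end CBPV

namespace CBPV

/-- Call-by-name fullness: `t full` iff `t = &{}`. -/
def CBNFull (S : SrcSig) (t : String) : Prop := S.def_ t = .withRec []

/-- One unfolding of the rules for call-by-name subtyping `t ≤ u`. -/
def CBNUnf (S : SrcSig) (R : String → String → Prop) (t u : String) : Prop :=
  (∃ t₁ t₂ u₁ u₂, S.def_ t = .arrow t₁ t₂ ∧ S.def_ u = .arrow u₁ u₂ ∧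
     R u₁ t₁ ∧ R t₂ u₂) ∨
  (∃ t₁ t₂ u₁ u₂, S.def_ t = .tensor t₁ t₂ ∧ S.def_ u = .tensor u₁ u₂ ∧
     R t₁ u₁ ∧ R t₂ u₂) ∨
  (S.def_ t = .one ∧ S.def_ u = .one) ∨
  (∃ L J, S.def_ t = .plus L ∧ S.def_ u = .plus J ∧
     ∀ p ∈ L, ∃ uℓ, J.lookup (Prod.fst p) = some uℓ ∧ R (Prod.snd p) uℓ) ∨
  (∃ L J, S.def_ t = .withRec L ∧ S.def_ u = .withRec J ∧
     ∀ p ∈ J, ∃ tj, L.lookup (Prod.fst p) = some tj ∧ R tj (Prod.snd p)) ∨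
  (S.def_ t = .plus []) ∨
  CBNFull S u

/-- Call-by-name subtyping `t ≤ u`, interpreted as circular derivations
(greatest fixed point of the call-by-name subtyping rules). -/
def CBNSub (S : SrcSig) (t u : String) : Prop :=
  ∃ R : String → String → Prop, (∀ a b, R a b → CBNUnf S R a b) ∧ R t u

/-- Levy's call-by-name translation of types, specified relationally:
`tr t` is the CBPV negative type name `[t]_N`, and the translated signature is
in normal form, with auxiliary type names inserted as needed:
`[τ→σ]_N = ↓[τ]_N → [σ]_N`, `[τ₁⊗τ₂]_N = ↑(↓[τ₁]_N ⊗ ↓[τ₂]_N)`, `[1]_N = ↑1`,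
`[⊕{ℓ:τ_ℓ}]_N = ↑⊕{ℓ:↓[τ_ℓ]_N}`, and `[&{ℓ:σ_ℓ}]_N = &{ℓ:[σ_ℓ]_N}`. -/
def CBNTrans (S : SrcSig) (Sg : Signature) (tr : String → String) : Prop :=
  ∀ t : String,
    match S.def_ t with
    | .arrow t₁ t₂ => ∃ p,
        Sg.neg (tr t) = .arrow (.name p) (.name (tr t₂)) ∧
        Sg.pos p = .down (.name (tr t₁))
    | .tensor t₁ t₂ => ∃ q p₁ p₂,
        Sg.neg (tr t) = .up (.name q) ∧
        Sg.pos q = .tensor (.name p₁) (.name p₂) ∧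
        Sg.pos p₁ = .down (.name (tr t₁)) ∧
        Sg.pos p₂ = .down (.name (tr t₂))
    | .one => ∃ q, Sg.neg (tr t) = .up (.name q) ∧ Sg.pos q = .one
    | .plus L => ∃ (q : String) (P : Label × String → String),
        Sg.neg (tr t) = .up (.name q) ∧
        Sg.pos q = .plus (L.map (fun p => (p.1, PosTp.name (P p)))) ∧
        ∀ p ∈ L, Sg.pos (P p) = .down (.name (tr (Prod.snd p)))
    | .withRec L =>
        Sg.neg (tr t) = .withRec (L.map (fun p => (p.1, NegTp.name (tr p.2))))

end CBPV

theorem List.exists_mem_lookup_of_lookup_map_eq_some {α β γ : Type*} [BEq α] [LawfulBEq α]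
    {g : α × β → γ} {k : α} {v : γ} :
    ∀ {L : List (α × β)}, (L.map fun p => (p.1, g p)).lookup k = some v →
      ∃ p ∈ L, L.lookup k = some p.2 ∧ g p = v
  | [], h => by simp at h
  | (a, b) :: L, h => by
    by_cases hk : k = a
    · subst hk
      simp only [List.map_cons, List.lookup_cons_self, Option.some.injEq] at h
      exact ⟨(k, b), List.mem_cons_self, List.lookup_cons_self, h⟩
    · have hne : (k == a) = false := beq_false_of_ne hk
      simp only [List.map_cons, List.lookup_cons, hne] at h
      obtain ⟨p, hp, hlook, hv⟩ := List.exists_mem_lookup_of_lookup_map_eq_some h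
      exact ⟨p, List.mem_cons_of_mem _ hp, by simpa [List.lookup_cons, hne] using hlook, hv⟩

namespace CBPV

section

variable {S : SrcSig} {Sg : Signature} {tr : String → String} {P N P' N' : String → String → Prop}

theorem TpEmpty.unfold {t : String} (h : TpEmpty Sg t) : EmptyUnf Sg (TpEmpty Sg) t := by
  obtain ⟨E, hE, ht⟩ := h
  rcases hE t ht with ⟨L, hL, hall⟩ | ⟨t₁, t₂, hts, hor⟩
  · exact Or.inl ⟨L, hL, fun p hp => (hall p hp).imp fun _ ⟨hj, he⟩ => ⟨hj, E, hE, he⟩⟩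
  · exact Or.inr ⟨t₁, t₂, hts, hor.imp (⟨E, hE, ·⟩) (⟨E, hE, ·⟩)⟩

theorem not_tpEmpty_of_down {t : String} {σ : NegTp} (ht : Sg.pos t = .down σ) :
    ¬ TpEmpty Sg t := fun h => by
  rcases h.unfold with ⟨_, hL, _⟩ | ⟨_, _, hts, _⟩ <;> simp_all

theorem PosSubUnf.mono (hP : ∀ a b, P a b → P' a b) (hN : ∀ a b, N a b → N' a b)
    {t u : String} (h : PosSubUnf Sg P N t u) : PosSubUnf Sg P' N' t u := by
  rcases h with ⟨t₁, t₂, u₁, u₂, ht, hu, h₁, h₂⟩ | hone | ⟨L, K, ht, hu, hall⟩ |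
    ⟨s, r, ht, hu, hsr⟩ | hemp
  · exact Or.inl ⟨t₁, t₂, u₁, u₂, ht, hu, hP _ _ h₁, hP _ _ h₂⟩
  · exact Or.inr (Or.inl hone)
  · refine Or.inr (Or.inr (Or.inl ⟨L, K, ht, hu, fun p hp => ?_⟩))
    obtain ⟨tj, hj, hc⟩ := hall p hp
    exact ⟨tj, hj, hc.imp_right fun ⟨uj, hl, hsub⟩ => ⟨uj, hl, hP _ _ hsub⟩⟩
  · exact Or.inr (Or.inr (Or.inr (Or.inl ⟨s, r, ht, hu, hN _ _ hsr⟩)))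
  · exact Or.inr (Or.inr (Or.inr (Or.inr hemp)))

theorem NegSubUnf.mono (hP : ∀ a b, P a b → P' a b) (hN : ∀ a b, N a b → N' a b)
    {s r : String} (h : NegSubUnf Sg P N s r) : NegSubUnf Sg P' N' s r := by
  rcases h with ⟨t₁, s₂, u₁, r₂, hs, hr, h₁, h₂⟩ | ⟨t, u, hs, hr, htu⟩ | ⟨L, K, hs, hr, hall⟩ |
    hemp | hfull
  · exact Or.inl ⟨t₁, s₂, u₁, r₂, hs, hr, hP _ _ h₁, hN _ _ h₂⟩
  · exact Or.inr (Or.inl ⟨t, u, hs, hr, hP _ _ htu⟩)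
  · refine Or.inr (Or.inr (Or.inl ⟨L, K, hs, hr, fun p hp => ?_⟩))
    obtain ⟨rj, hj, sj, hl, hsub⟩ := hall p hp
    exact ⟨rj, hj, sj, hl, hN _ _ hsub⟩
  · exact Or.inr (Or.inr (Or.inr (Or.inl hemp)))
  · exact Or.inr (Or.inr (Or.inr (Or.inr hfull)))

theorem PosSub.unfold {t u : String} (h : PosSub Sg t u) :
    PosSubUnf Sg (PosSub Sg) (NegSub Sg) t u := by
  obtain ⟨P, N, hP, hN, htu⟩ := h
  exact (hP t u htu).mono (fun _ _ h => ⟨P, N, hP, hN, h⟩) (fun _ _ h => ⟨P, N, hP, hN, h⟩)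

theorem NegSub.unfold {s r : String} (h : NegSub Sg s r) :
    NegSubUnf Sg (PosSub Sg) (NegSub Sg) s r := by
  obtain ⟨P, N, hP, hN, hsr⟩ := h
  exact (hN s r hsr).mono (fun _ _ h => ⟨P, N, hP, hN, h⟩) (fun _ _ h => ⟨P, N, hP, hN, h⟩)

theorem NegSub.of_posSub_down {t u s r : String} (ht : Sg.pos t = .down (.name s))
    (hu : Sg.pos u = .down (.name r)) (h : PosSub Sg t u) : NegSub Sg s r := by
  rcases h.unfold with ⟨_, _, _, _, ht', _⟩ | ⟨ht', _⟩ | ⟨_, _, ht', _⟩ |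
    ⟨s', r', ht', hu', hsr⟩ | hemp <;> simp_all [not_tpEmpty_of_down ht]

theorem CBNTrans.of_arrow (htr : CBNTrans S Sg tr) {a : String} {p s : String}
    (h : Sg.neg (tr a) = .arrow (.name p) (.name s)) :
    ∃ a₁ a₂, S.def_ a = .arrow a₁ a₂ ∧ s = tr a₂ ∧ Sg.pos p = .down (.name (tr a₁)) := by
  have ht := htr a
  cases hdef : S.def_ a <;> rw [hdef] at ht <;> simp_all

theorem CBNTrans.of_withRec (htr : CBNTrans S Sg tr) {a : String} {K : List (Label × NegTp)}
    (h : Sg.neg (tr a) = .withRec K) :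
    ∃ L, S.def_ a = .withRec L ∧ K = L.map fun p => (p.1, NegTp.name (tr p.2)) := by
  have ht := htr a
  cases hdef : S.def_ a <;> rw [hdef] at ht <;> simp_all

theorem CBNTrans.of_up_tensor (htr : CBNTrans S Sg tr) {a q p₁ p₂ : String}
    (h : Sg.neg (tr a) = .up (.name q)) (hq : Sg.pos q = .tensor (.name p₁) (.name p₂)) :
    ∃ a₁ a₂, S.def_ a = .tensor a₁ a₂ ∧
      Sg.pos p₁ = .down (.name (tr a₁)) ∧ Sg.pos p₂ = .down (.name (tr a₂)) := by
  have ht := htr a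
  cases hdef : S.def_ a <;> rw [hdef] at ht <;> simp_all

theorem CBNTrans.of_up_one (htr : CBNTrans S Sg tr) {a q : String}
    (h : Sg.neg (tr a) = .up (.name q)) (hq : Sg.pos q = .one) : S.def_ a = .one := by
  have ht := htr a
  cases hdef : S.def_ a <;> rw [hdef] at ht <;> simp_all

theorem CBNTrans.of_up_plus (htr : CBNTrans S Sg tr) {a q : String} {K : List (Label × PosTp)}
    (h : Sg.neg (tr a) = .up (.name q)) (hq : Sg.pos q = .plus K) :
    ∃ (L : List (Label × String)) (P : Label × String → String), S.def_ a = .plus L ∧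
      K = L.map (fun p => (p.1, PosTp.name (P p))) ∧
      ∀ p ∈ L, Sg.pos (P p) = .down (.name (tr p.2)) := by
  have ht := htr a
  cases hdef : S.def_ a <;> rw [hdef] at ht <;> simp_all

theorem CBNTrans.pos_ne_down_of_up (htr : CBNTrans S Sg tr) {a q : String} {σ : NegTp}
    (h : Sg.neg (tr a) = .up (.name q)) : Sg.pos q ≠ .down σ := by
  intro hq
  have ht := htr a
  cases hdef : S.def_ a <;> rw [hdef] at ht <;> simp_all

theorem CBNTrans.eq_plus_nil_of_up_tpEmpty (htr : CBNTrans S Sg tr) {a q : String}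
    (h : Sg.neg (tr a) = .up (.name q)) (he : TpEmpty Sg q) : S.def_ a = .plus [] := by
  rcases he.unfold with ⟨K, hq, hall⟩ | ⟨p₁, p₂, hq, hor⟩
  · obtain ⟨L, P, hdef, rfl, hdown⟩ := htr.of_up_plus h hq
    cases L with
    | nil => exact hdef
    | cons p L =>
      obtain ⟨tj, hj, hemp⟩ := hall _ (List.mem_map_of_mem (List.mem_cons_self (a := p)))
      cases hj
      exact absurd hemp (not_tpEmpty_of_down (hdown p List.mem_cons_self))
  · obtain ⟨a₁, a₂, -, hd₁, hd₂⟩ := htr.of_up_tensor h hq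
    exact (hor.elim (not_tpEmpty_of_down hd₁) (not_tpEmpty_of_down hd₂)).elim

theorem CBNTrans.cbnFull_of_tpFull (htr : CBNTrans S Sg tr) {t : String}
    (h : TpFull Sg (tr t)) : CBNFull S t := by
  rcases h with ⟨p, s, harr, hemp⟩ | hwith
  · obtain ⟨_, _, -, -, hdown⟩ := htr.of_arrow harr
    exact absurd hemp (not_tpEmpty_of_down hdown)
  · obtain ⟨L, hdef, hL⟩ := htr.of_withRec hwith
    rw [CBNFull, hdef, List.map_eq_nil_iff.mp hL.symm]

theorem CBNTrans.cbnUnf_of_up_posSub (htr : CBNTrans S Sg tr) {a b q q' : String}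
    (ha : Sg.neg (tr a) = .up (.name q)) (hb : Sg.neg (tr b) = .up (.name q'))
    (h : PosSub Sg q q') : CBNUnf S (fun x y => NegSub Sg (tr x) (tr y)) a b := by
  rcases h.unfold with ⟨x₁, x₂, y₁, y₂, hx, hy, h₁, h₂⟩ | ⟨hx, hy⟩ | ⟨K, K', hx, hy, hall⟩ |
    ⟨s, r, hx, -, -⟩ | hemp
  · obtain ⟨a₁, a₂, hdefa, hx₁, hx₂⟩ := htr.of_up_tensor ha hx
    obtain ⟨b₁, b₂, hdefb, hy₁, hy₂⟩ := htr.of_up_tensor hb hy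
    exact Or.inr (Or.inl ⟨a₁, a₂, b₁, b₂, hdefa, hdefb,
      .of_posSub_down hx₁ hy₁ h₁, .of_posSub_down hx₂ hy₂ h₂⟩)
  · exact Or.inr (Or.inr (Or.inl ⟨htr.of_up_one ha hx, htr.of_up_one hb hy⟩))
  · obtain ⟨L, P, hdefa, rfl, hda⟩ := htr.of_up_plus ha hx
    obtain ⟨J, Q, hdefb, rfl, hdb⟩ := htr.of_up_plus hb hy
    refine Or.inr (Or.inr (Or.inr (Or.inl ⟨L, J, hdefa, hdefb, fun p hp => ?_⟩)))
    obtain ⟨tj, hj, hc⟩ := hall _ (List.mem_map_of_mem hp)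
    cases hj
    rcases hc with hemp | ⟨uj, hlook, hsub⟩
    · exact absurd hemp (not_tpEmpty_of_down (hda p hp))
    · obtain ⟨j, hj, hjlook, hje⟩ := List.exists_mem_lookup_of_lookup_map_eq_some hlook
      cases hje
      exact ⟨j.2, hjlook, .of_posSub_down (hda p hp) (hdb j hj) hsub⟩
  · exact absurd hx (htr.pos_ne_down_of_up ha)
  · exact Or.inr (Or.inr (Or.inr (Or.inr (Or.inr (Or.inl
      (htr.eq_plus_nil_of_up_tpEmpty ha hemp))))))

theorem CBNTrans.cbnUnf_of_negSub (htr : CBNTrans S Sg tr) {a b : String}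
    (h : NegSub Sg (tr a) (tr b)) : CBNUnf S (fun x y => NegSub Sg (tr x) (tr y)) a b := by
  rcases h.unfold with ⟨p, s, p', r, ha, hb, hp, hsr⟩ | ⟨q, q', ha, hb, hq⟩ |
    ⟨K, K', ha, hb, hall⟩ | ⟨q, ha, hemp⟩ | hfull
  · obtain ⟨a₁, a₂, hdefa, rfl, hpa⟩ := htr.of_arrow ha
    obtain ⟨b₁, b₂, hdefb, rfl, hpb⟩ := htr.of_arrow hb
    exact Or.inl ⟨a₁, a₂, b₁, b₂, hdefa, hdefb, .of_posSub_down hpb hpa hp, hsr⟩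
  · exact htr.cbnUnf_of_up_posSub ha hb hq
  · obtain ⟨L, hdefa, rfl⟩ := htr.of_withRec ha
    obtain ⟨J, hdefb, rfl⟩ := htr.of_withRec hb
    refine Or.inr (Or.inr (Or.inr (Or.inr (Or.inl ⟨L, J, hdefa, hdefb, fun j hj => ?_⟩))))
    obtain ⟨rj, hrj, sj, hlook, hsub⟩ := hall _ (List.mem_map_of_mem hj)
    cases hrj
    obtain ⟨p, -, hplook, hpe⟩ := List.exists_mem_lookup_of_lookup_map_eq_some hlook
    cases hpe
    exact ⟨p.2, hplook, hsub⟩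
  · exact Or.inr (Or.inr (Or.inr (Or.inr (Or.inr (Or.inl
      (htr.eq_plus_nil_of_up_tpEmpty ha hemp))))))
  · exact Or.inr (Or.inr (Or.inr (Or.inr (Or.inr (Or.inr (htr.cbnFull_of_tpFull hfull))))))

end

/-- Soundness of polarized subtyping for call-by-name: for call-by-name type
names `t`, `u` and their Levy translations `[t]_N`, `[u]_N` into negative
CBPV type names,
(1) if `[t]_N full` (CBPV fullness) then `t full` (CBN fullness), and
(2) if `[t]_N ≤ [u]_N` (CBPV negative subtyping) then `t ≤ u` (CBN subtyping). -/
theorem cbn_subtyping_sound (S : SrcSig) (Sg : Signature)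
    (tr : String → String) (htr : CBNTrans S Sg tr) :
    (∀ t : String, TpFull Sg (tr t) → CBNFull S t) ∧
    (∀ t u : String, NegSub Sg (tr t) (tr u) → CBNSub S t u) :=
  ⟨fun _ => htr.cbnFull_of_tpFull,
    fun _ _ h => ⟨fun x y => NegSub Sg (tr x) (tr y), fun _ _ => htr.cbnUnf_of_negSub, h⟩⟩

end CBPV
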